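/- Let 1 ≤ j₁ ≠ j₂ ≤ l′ (so n_{j₁} ≡ n_{j₂} ≡ 2 (mod 4)) and let N = lcm(n_{j₁}, n_{j₂}). Then there exists a non-zero scalar d ∈ 𝕜 such that Π*(w_{j₁,j₂}) = d · x_{0,j₁}^{N/n_{j₁}} x_{0,j₂}^{N/n_{j₂}}. -/
import Mathlib


/- STATEMENT 4: for `j₁ ≠ j₂ ≤ l'` (so `n_{j₁} ≡ n_{j₂} ≡ 2 (mod 4)`) and
`N = lcm(n_{j₁}, n_{j₂})`, there is a non-zero scalar `d` with
`Π*(w_{j₁,j₂}) = d ⬝ x_{0,j₁}^{N/n_{j₁}} x_{0,j₂}^{N/n_{j₂}}`. -/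

open MvPolynomial Finset

variable (𝕜 : Type) [Field 𝕜] [CharZero 𝕜] (k : ℕ) (n : Fin k → ℕ)

/-- The variable `x_{i,j}` (as `X ⟨j,i⟩`), or `0` if `i` is out of range. -/
noncomputable def Xv (j : Fin k) (i : ℕ) : MvPolynomial (Σ j : Fin k, Fin (n j + 1)) 𝕜 :=
  if h : i ≤ n j then MvPolynomial.X ⟨j, ⟨i, Nat.lt_succ_of_le h⟩⟩ else 0

/-- The derivation `Δ_j` with `Δ_j x_{i,j} = (n_j - i)(i+1) x_{i+1,j}`, vanishing on the
variables of the other summands. -/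
noncomputable def Δw (j : Fin k) : Derivation 𝕜 (MvPolynomial (Σ j : Fin k, Fin (n j + 1)) 𝕜)
    (MvPolynomial (Σ j : Fin k, Fin (n j + 1)) 𝕜) :=
  mkDerivation 𝕜 fun v =>
    if v.1 = j then C ((((n v.1 - (v.2 : ℕ)) * ((v.2 : ℕ) + 1) : ℕ)) : 𝕜) * Xv 𝕜 k n v.1 ((v.2 : ℕ) + 1)
    else 0

/-- The semitransvectant `w_{j₁,j₂} = ∑_{q=0}^{N} (-1)^q N! Δ_{j₁}^{N-q}(x_{0,j₁}^{N/n_{j₁}})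
Δ_{j₂}^{q}(x_{0,j₂}^{N/n_{j₂}})` where `N = lcm(n_{j₁}, n_{j₂})`. -/
noncomputable def wP (j1 j2 : Fin k) : MvPolynomial (Σ j : Fin k, Fin (n j + 1)) 𝕜 :=
  ∑ q ∈ Finset.range (Nat.lcm (n j1) (n j2) + 1),
    C ((-1 : 𝕜) ^ q * ((Nat.lcm (n j1) (n j2)).factorial : 𝕜)) *
      ((⇑(Δw 𝕜 k n j1))^[Nat.lcm (n j1) (n j2) - q] (Xv 𝕜 k n j1 0 ^ (Nat.lcm (n j1) (n j2) / n j1))) *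
      ((⇑(Δw 𝕜 k n j2))^[q] (Xv 𝕜 k n j2 0 ^ (Nat.lcm (n j1) (n j2) / n j2)))

/-- The variable `x_{i,j}` of `R' = 𝕜[x_{i,j} : 0 ≤ i ≤ ⌊n_j/2⌋]`, or `0` if out of range. -/
noncomputable def Xv' (j : Fin k) (i : ℕ) : MvPolynomial (Σ j : Fin k, Fin (n j / 2 + 1)) 𝕜 :=
  if h : i ≤ n j / 2 then MvPolynomial.X ⟨j, ⟨i, Nat.lt_succ_of_le h⟩⟩ else 0

/-- The projection `Π* : R → R'`, sending `x_{i,j}` to `x_{i - ⌈n_j/2⌉, j}` if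
`i ≥ ⌈n_j/2⌉` and to `0` otherwise. -/
noncomputable def projStar : MvPolynomial (Σ j : Fin k, Fin (n j + 1)) 𝕜 →ₐ[𝕜]
    MvPolynomial (Σ j : Fin k, Fin (n j / 2 + 1)) 𝕜 :=
  aeval fun v => if (n v.1 + 1) / 2 ≤ (v.2 : ℕ) then Xv' 𝕜 k n v.1 ((v.2 : ℕ) - (n v.1 + 1) / 2)
    else 0

set_option linter.unusedSectionVars false in
theorem Derivation.iterate_leibniz {R A : Type*} [CommSemiring R] [CommSemiring A] [Algebra R A]
    (D : Derivation R A A) {n : ℕ} (p q : A) :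
    (⇑D)^[n] (p * q) =
      ∑ k ∈ range n.succ, (n.choose k • ((⇑D)^[n - k] p * (⇑D)^[k] q)) := by
  induction n with
  | zero => simp [Finset.range]
  | succ n IH =>
    calc
      (⇑D)^[n + 1] (p * q) =
          D (∑ k ∈ range n.succ,
              n.choose k • ((⇑D)^[n - k] p * (⇑D)^[k] q)) := by
        rw [Function.iterate_succ_apply', IH]
      _ = (∑ k ∈ range n.succ,
            n.choose k • ((⇑D)^[n - k + 1] p * (⇑D)^[k] q)) +
          ∑ k ∈ range n.succ,
            n.choose k • ((⇑D)^[n - k] p * (⇑D)^[k + 1] q) := by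
        rw [map_sum]
        simp_rw [map_nsmul, D.leibniz, smul_eq_mul, Function.iterate_succ_apply',
          smul_add, sum_add_distrib]
        rw [add_comm]
        congr 1 <;> apply sum_congr rfl fun k _ => ?_ <;> ring_nf
      _ = (∑ k ∈ range n.succ,
                n.choose k.succ • ((⇑D)^[n - k] p * (⇑D)^[k + 1] q)) +
              1 • ((⇑D)^[n + 1] p * (⇑D)^[0] q) +
            ∑ k ∈ range n.succ, n.choose k • ((⇑D)^[n - k] p * (⇑D)^[k + 1] q) :=
        ?_
      _ = ((∑ k ∈ range n.succ, n.choose k • ((⇑D)^[n - k] p * (⇑D)^[k + 1] q)) +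
              ∑ k ∈ range n.succ,
                n.choose k.succ • ((⇑D)^[n - k] p * (⇑D)^[k + 1] q)) +
            1 • ((⇑D)^[n + 1] p * (⇑D)^[0] q) := by
        rw [add_comm, add_assoc]
      _ = (∑ i ∈ range n.succ,
              (n + 1).choose (i + 1) • ((⇑D)^[n + 1 - (i + 1)] p * (⇑D)^[i + 1] q)) +
            1 • ((⇑D)^[n + 1] p * (⇑D)^[0] q) := by
        simp_rw [Nat.choose_succ_succ, Nat.succ_sub_succ, add_smul, sum_add_distrib]
      _ = ∑ k ∈ range n.succ.succ,
            n.succ.choose k • ((⇑D)^[n.succ - k] p * (⇑D)^[k] q) := by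
        rw [sum_range_succ' _ n.succ, Nat.choose_zero_right, tsub_zero]
    congr
    refine (sum_range_succ' _ _).trans (congr_arg₂ (· + ·) ?_ ?_)
    · rw [sum_range_succ, Nat.choose_succ_self, zero_smul, add_zero]
      refine sum_congr rfl fun k hk => ?_
      rw [mem_range] at hk
      congr
      omega
    · rw [Nat.choose_zero_right, tsub_zero]

theorem Δw_Xv (j : Fin k) (i : ℕ) :
    Δw 𝕜 k n j (Xv 𝕜 k n j i) = C (((n j - i) * (i + 1) : ℕ) : 𝕜) * Xv 𝕜 k n j (i + 1) := by
  unfold Xv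
  by_cases h : i ≤ n j
  · rw [dif_pos h]
    rw [Δw, mkDerivation_X]
    simp only [if_pos rfl]
    rfl
  · rw [dif_neg h, map_zero]
    have : n j - i = 0 := by omega
    rw [this]
    simp

theorem Δw_iter_Xv0 (j : Fin k) (r : ℕ) :
    (⇑(Δw 𝕜 k n j))^[r] (Xv 𝕜 k n j 0) =
      C ((r.factorial * (r.factorial * (n j).choose r) : ℕ) : 𝕜) * Xv 𝕜 k n j r := by
  induction r with
  | zero => simp
  | succ r IH =>
    rw [Function.iterate_succ_apply', IH]
    have hsm : (Δw 𝕜 k n j) (C ((r.factorial * (r.factorial * (n j).choose r) : ℕ) : 𝕜) * Xv 𝕜 k n j r)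
        = C ((r.factorial * (r.factorial * (n j).choose r) : ℕ) : 𝕜) * (Δw 𝕜 k n j (Xv 𝕜 k n j r)) := by
      rw [← smul_eq_C_mul, ← smul_eq_C_mul, Derivation.map_smul]
    rw [hsm, Δw_Xv, ← mul_assoc, ← C_mul]
    congr 2
    push_cast [Nat.factorial_succ]
    have hch : ((n j).choose r * (n j - r) : ℕ) = ((n j).choose (r+1) * (r+1) : ℕ) :=
      (Nat.choose_succ_right_eq (n j) r).symm
    have hc : (((n j).choose r : 𝕜) * ((n j : ℕ) - (r : ℕ) : ℕ)) = ((n j).choose (r+1) : 𝕜) * ((r : 𝕜)+1) := by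
      exact_mod_cast congrArg (Nat.cast : ℕ → 𝕜) hch
    push_cast at hc
    linear_combination (r.factorial : 𝕜)^2 * (r+1) * hc

theorem projStar_Xv (j : Fin k) (i : ℕ) :
    projStar 𝕜 k n (Xv 𝕜 k n j i) =
      if (n j + 1) / 2 ≤ i then Xv' 𝕜 k n j (i - (n j + 1) / 2) else 0 := by
  unfold Xv
  by_cases h : i ≤ n j
  · rw [dif_pos h, projStar, aeval_X]
  · rw [dif_neg h, map_zero]
    by_cases h2 : (n j + 1) / 2 ≤ i
    · rw [if_pos h2, Xv', dif_neg (by omega)]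
    · rw [if_neg h2]

theorem projStar_iter_zero (j : Fin k) (m : ℕ) : ∀ p : ℕ, p < m * ((n j + 1)/2) →
    projStar 𝕜 k n ((⇑(Δw 𝕜 k n j))^[p] (Xv 𝕜 k n j 0 ^ m)) = 0 := by
  induction m with
  | zero => intro p hp; omega
  | succ m IH =>
    intro p hp
    rw [pow_succ, Derivation.iterate_leibniz, map_sum]
    apply Finset.sum_eq_zero
    intro q hq
    rw [mem_range] at hq
    rw [map_nsmul, map_mul]
    by_cases h : (n j + 1)/2 ≤ q
    · have hlt : p - q < m * ((n j + 1)/2) := by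
        have h1 : (m+1) * ((n j + 1)/2) = m * ((n j + 1)/2) + ((n j + 1)/2) := Nat.succ_mul _ _
        omega
      rw [IH (p - q) hlt, zero_mul, smul_zero]
    · rw [Δw_iter_Xv0, map_mul, projStar_Xv, if_neg h, mul_zero, mul_zero, smul_zero]

theorem projStar_iter_exact (j : Fin k) (m : ℕ) :
    ∃ c : ℕ, 0 < c ∧
      projStar 𝕜 k n ((⇑(Δw 𝕜 k n j))^[m * ((n j + 1)/2)] (Xv 𝕜 k n j 0 ^ m)) =
        C (c : 𝕜) * Xv' 𝕜 k n j 0 ^ m := by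
  induction m with
  | zero => exact ⟨1, one_pos, by simp⟩
  | succ m IH =>
    obtain ⟨c, hc, hC⟩ := IH
    refine ⟨((m+1)*((n j + 1)/2)).choose ((n j + 1)/2) *
        (c * (((n j + 1)/2).factorial * (((n j + 1)/2).factorial * (n j).choose ((n j + 1)/2)))), ?_, ?_⟩
    · have h1 : 0 < (n j).choose ((n j + 1)/2) := Nat.choose_pos (by omega)
      have h0 : 0 < ((m+1)*((n j + 1)/2)).choose ((n j + 1)/2) :=
        Nat.choose_pos (Nat.le_mul_of_pos_left _ m.succ_pos)
      exact Nat.mul_pos h0 (Nat.mul_pos hc (Nat.mul_pos (Nat.factorial_pos _)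
        (Nat.mul_pos (Nat.factorial_pos _) h1)))
    · rw [pow_succ, Derivation.iterate_leibniz, map_sum]
      rw [Finset.sum_eq_single ((n j + 1)/2)]
      · rw [map_nsmul, map_mul]
        have hsub : (m+1) * ((n j + 1)/2) - (n j + 1)/2 = m * ((n j + 1)/2) := by
          have h1 : (m+1) * ((n j + 1)/2) = m * ((n j + 1)/2) + ((n j + 1)/2) := Nat.succ_mul _ _
          omega
        rw [hsub, hC, Δw_iter_Xv0, map_mul, projStar_Xv, if_pos le_rfl, Nat.sub_self]
        have hPC : projStar 𝕜 k n (C (((((n j + 1)/2).factorial * (((n j + 1)/2).factorial * (n j).choose ((n j + 1)/2))) : ℕ) : 𝕜))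
            = C (((((n j + 1)/2).factorial * (((n j + 1)/2).factorial * (n j).choose ((n j + 1)/2))) : ℕ) : 𝕜) := by
          rw [projStar, aeval_C, MvPolynomial.algebraMap_eq]
        rw [hPC, nsmul_eq_mul, ← C_eq_coe_nat]
        push_cast
        simp only [C_mul]
        ring
      · intro b hb hbne
        rw [mem_range] at hb
        rw [map_nsmul, map_mul]
        by_cases h : (n j + 1)/2 ≤ b
        · have hlt : (m+1) * ((n j + 1)/2) - b < m * ((n j + 1)/2) := by
            have h1 : (m+1) * ((n j + 1)/2) = m * ((n j + 1)/2) + ((n j + 1)/2) := Nat.succ_mul _ _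
            have hb' : (n j + 1)/2 < b := lt_of_le_of_ne h (Ne.symm hbne)
            have hpos : 0 < m * ((n j + 1)/2) := by omega
            omega
          rw [projStar_iter_zero 𝕜 k n j m _ hlt, zero_mul, smul_zero]
        · rw [Δw_iter_Xv0, map_mul, projStar_Xv, if_neg h, mul_zero, mul_zero, smul_zero]
      · intro hmem
        exfalso
        apply hmem
        rw [mem_range]
        have : 1 * ((n j + 1)/2) ≤ (m+1) * ((n j + 1)/2) :=
          Nat.mul_le_mul_right _ (by omega)
        omega

theorem projStar_w (𝕜 : Type) [Field 𝕜] [CharZero 𝕜] (k : ℕ) (hk : 2 ≤ k)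
    (n : Fin k → ℕ) (l' l : ℕ) (hl'l : l' ≤ l) (hlk : l ≤ k)
    (h2 : ∀ j : Fin k, (j : ℕ) < l' → n j % 4 = 2)
    (h0 : ∀ j : Fin k, l' ≤ (j : ℕ) → (j : ℕ) < l → n j % 4 = 0)
    (hodd : ∀ j : Fin k, l ≤ (j : ℕ) → Odd (n j))
    (j1 j2 : Fin k) (hj : j1 ≠ j2) (hj1 : (j1 : ℕ) < l') (hj2 : (j2 : ℕ) < l') :
    ∃ d : 𝕜, d ≠ 0 ∧
      projStar 𝕜 k n (wP 𝕜 k n j1 j2) =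
        C d * Xv' 𝕜 k n j1 0 ^ (Nat.lcm (n j1) (n j2) / n j1) *
          Xv' 𝕜 k n j2 0 ^ (Nat.lcm (n j1) (n j2) / n j2) := by
  have hn1 : n j1 % 4 = 2 := h2 j1 hj1
  have hn2 : n j2 % 4 = 2 := h2 j2 hj2
  set N := Nat.lcm (n j1) (n j2) with hN
  have hd1 : n j1 ∣ N := Nat.dvd_lcm_left _ _
  have hd2 : n j2 ∣ N := Nat.dvd_lcm_right _ _
  have hN1 : N / n j1 * n j1 = N := Nat.div_mul_cancel hd1
  have hN2 : N / n j2 * n j2 = N := Nat.div_mul_cancel hd2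
  have key1 : N / n j1 * ((n j1 + 1)/2) * 2 = N := by
    rw [mul_assoc]
    have h21 : (n j1 + 1)/2 * 2 = n j1 := by omega
    rw [h21, hN1]
  have key2 : N / n j2 * ((n j2 + 1)/2) * 2 = N := by
    rw [mul_assoc]
    have h22 : (n j2 + 1)/2 * 2 = n j2 := by omega
    rw [h22, hN2]
  have hm1 : N / n j1 * ((n j1 + 1)/2) = N / 2 := by omega
  have hm2 : N / n j2 * ((n j2 + 1)/2) = N / 2 := by omega
  have hNeven : N % 2 = 0 := by omega
  obtain ⟨c1, hc1, hC1⟩ := projStar_iter_exact 𝕜 k n j1 (N / n j1)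
  obtain ⟨c2, hc2, hC2⟩ := projStar_iter_exact 𝕜 k n j2 (N / n j2)
  have hPC : ∀ a : 𝕜, projStar 𝕜 k n (C a) = C a := fun a => by
    rw [projStar, aeval_C, MvPolynomial.algebraMap_eq]
  refine ⟨(-1)^(N/2) * (N.factorial : 𝕜) * c1 * c2, ?_, ?_⟩
  · exact mul_ne_zero (mul_ne_zero (mul_ne_zero
      (pow_ne_zero _ (neg_ne_zero.mpr one_ne_zero))
      (Nat.cast_ne_zero.mpr (Nat.factorial_pos N).ne'))
      (Nat.cast_ne_zero.mpr hc1.ne')) (Nat.cast_ne_zero.mpr hc2.ne')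
  · rw [wP, map_sum]
    rw [Finset.sum_eq_single (N/2)]
    · have e1 : N - N/2 = N / n j1 * ((n j1 + 1)/2) := by omega
      have e2 : N/2 = N / n j2 * ((n j2 + 1)/2) := by omega
      rw [map_mul, map_mul, hPC, e1, hC1]
      rw [show (⇑(Δw 𝕜 k n j2))^[N/2] (Xv 𝕜 k n j2 0 ^ (N / n j2)) =
        (⇑(Δw 𝕜 k n j2))^[N / n j2 * ((n j2 + 1)/2)] (Xv 𝕜 k n j2 0 ^ (N / n j2)) by rw [← e2]]
      rw [hC2]
      simp only [C_mul]
      ring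
    · intro b hb hbne
      rw [mem_range] at hb
      rw [map_mul, map_mul]
      rcases lt_or_gt_of_ne hbne with hlt | hgt
      · rw [projStar_iter_zero 𝕜 k n j2 (N / n j2) b (by omega), mul_zero]
      · rw [projStar_iter_zero 𝕜 k n j1 (N / n j1) (N - b) (by omega), mul_zero, zero_mul]
    · intro hmem
      exact absurd (mem_range.mpr (by omega)) hmem
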